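/- arXiv:math/9801005 — 5 statements merged into one kernel-verified Lean document; each statement's English description precedes it below -/
import Mathlib

section
/- Let $Q$ be an indeterminate, $n \geq 1$, and suppose $N : \mathbb{N} \to \mathbb{Q}(Q)$ satisfies the recursion $\sum_{k=0}^{d} N_{d-k}\,(Q^{k+1} - 1) = Q^{(n+1)(d+1)} - 1$ for all $d \geq 0$. Then in the formal power series ring $\mathbb{Q}(Q)[[z]]$ one has $\sum_{d \geq 0} N_d z^d = \frac{1 - Q^{n+1}}{1 - Q} \cdot \frac{1 - Qz}{1 - Q^{n+1} z}$. -/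
/-!
Since `∑ₖ (a^(k+1) - 1) zᵏ = a/(1 - a z) - 1/(1 - z) = (a - 1)/((1 - z)(1 - a z))`, the recursion
says `N(z) · (Q - 1)/((1 - z)(1 - Q z)) = (Q^(n+1) - 1)/((1 - z)(1 - Q^(n+1) z))`. Multiplying out
the denominators gives the claimed identity, without ever dividing by `Q - 1`.
-/

open PowerSeries

namespace PowerSeries

variable {R : Type*} [CommRing R]

theorem mk_mul_mk_eq_of_sum_range (f g h : ℕ → R)
    (hfg : ∀ d, ∑ k ∈ Finset.range (d + 1), f (d - k) * g k = h d) : mk f * mk g = mk h := by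
  ext d
  rw [mul_comm, coeff_mul, coeff_mk, ← hfg,
    Finset.Nat.sum_antidiagonal_eq_sum_range_succ (fun i j => coeff i (mk g) * coeff j (mk f))]
  simp only [coeff_mk, mul_comm]

theorem mk_pow_mul_one_sub_C_mul_X (a : R) : mk (a ^ ·) * (1 - C a * X) = 1 := by
  simpa [rescale_mk, rescale_X] using congrArg (rescale a) (mk_one_mul_one_sub_eq_one R)

theorem mk_pow_succ_sub_one_mul (a : R) :
    mk (fun k => a ^ (k + 1) - 1) * ((1 - C a * X) * (1 - X)) = C a - 1 := by
  have hsplit : mk (fun k => a ^ (k + 1) - 1) = C a * mk (a ^ ·) - mk 1 := by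
    ext k
    simp [pow_succ']
  rw [hsplit]
  linear_combination (C a * (1 - X)) * mk_pow_mul_one_sub_C_mul_X a
    - (1 - C a * X) * mk_one_mul_one_sub_eq_one R

theorem mk_mul_C_one_sub_mul_one_sub_C_pow_mul_X (Q : R) (m : ℕ) (N : ℕ → R)
    (hrec : ∀ d, ∑ k ∈ Finset.range (d + 1), N (d - k) * (Q ^ (k + 1) - 1)
      = Q ^ (m * (d + 1)) - 1) :
    mk N * C (1 - Q) * (1 - C (Q ^ m) * X) = C (1 - Q ^ m) * (1 - C Q * X) := by
  have hconv : mk N * mk (fun k => Q ^ (k + 1) - 1) = mk (fun k => (Q ^ m) ^ (k + 1) - 1) :=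
    mk_mul_mk_eq_of_sum_range _ _ _ fun d => by rw [hrec, pow_mul]
  simp only [map_sub, map_one]
  linear_combination (mk N * (1 - C (Q ^ m) * X)) * mk_pow_succ_sub_one_mul Q
    - (1 - C Q * X) * mk_pow_succ_sub_one_mul (Q ^ m)
    - ((1 - C Q * X) * (1 - C (Q ^ m) * X) * (1 - X)) * hconv

end PowerSeries

theorem stmt_0_general (n : ℕ) (N : ℕ → RatFunc ℚ)
    (Q : RatFunc ℚ)
    (hrec : ∀ d : ℕ, ∑ k ∈ Finset.range (d + 1), N (d - k) * (Q ^ (k + 1) - 1)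
      = Q ^ ((n + 1) * (d + 1)) - 1) :
    (PowerSeries.mk N) * C (1 - Q) * (1 - C (Q ^ (n + 1)) * X)
      = C (1 - Q ^ (n + 1)) * (1 - C Q * X) :=
  mk_mul_C_one_sub_mul_one_sub_C_pow_mul_X Q (n + 1) N hrec

/-- generating function of the recursion counting coprime tuples of forms. -/
theorem stmt_0 (n : ℕ) (hn : 1 ≤ n) (N : ℕ → RatFunc ℚ)
    (Q : RatFunc ℚ) (hQ : Q = RatFunc.X)
    (hrec : ∀ d : ℕ, ∑ k ∈ Finset.range (d + 1), N (d - k) * (Q ^ (k + 1) - 1)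
      = Q ^ ((n + 1) * (d + 1)) - 1) :
    (PowerSeries.mk N) * C (1 - Q) * (1 - C (Q ^ (n + 1)) * X)
      = C (1 - Q ^ (n + 1)) * (1 - C Q * X) :=
  stmt_0_general n N Q hrec
end

section
/- Let $A$ be a commutative $\mathbb{Q}$-algebra, let $K, t, \varphi \in A$, and let $\mu$ be a natural number $\geq 3$. Define $S = \frac{K}{\mu}(1+t+\varphi)^{\mu} - \varphi^2 \frac{\mu-1}{2(\mu-2)} - \varphi\left(\frac{1}{(\mu-1)(\mu-2)} + \frac{t}{\mu-2}\right) - \left(\frac{1}{\mu(\mu-1)(\mu-2)} + \frac{t}{(\mu-1)(\mu-2)} + \frac{t^2}{2(\mu-2)}\right)$. If the critical point equation $K(1+t+\varphi)^{\mu-1} = \varphi\frac{\mu-1}{\mu-2} + \frac{t}{\mu-2} + \frac{1}{(\mu-1)(\mu-2)}$ holds, then $S = -\frac{\mu-1}{2\mu}\varphi^2 + \frac{\varphi}{\mu} - \frac{t^2}{2\mu}$. -/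
/-- at a critical point of the formal potential `S`, its value simplifies to
`-(μ-1)/(2μ) φ² + φ/μ - t²/(2μ)`.  Here `u, v, w` are the inverses of `μ, μ-1, μ-2`. -/
theorem stmt_4 (A : Type*) [CommRing A] [Algebra ℚ A]
    (μ : ℕ) (hμ : 3 ≤ μ) (K t φ u v w S : A)
    (hu : (μ : A) * u = 1) (hv : ((μ : A) - 1) * v = 1) (hw : ((μ : A) - 2) * w = 1)
    (hS : S = K * u * (1 + t + φ) ^ μ
        - (1/2 : ℚ) • (φ ^ 2 * ((μ : A) - 1) * w)
        - φ * (v * w + t * w)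
        - (u * v * w + t * v * w + (1/2 : ℚ) • (t ^ 2 * w)))
    (hcrit : K * (1 + t + φ) ^ (μ - 1) = φ * ((μ : A) - 1) * w + t * w + v * w) :
    S = -(1/2 : ℚ) • (((μ : A) - 1) * u * φ ^ 2) + φ * u - (1/2 : ℚ) • (t ^ 2 * u) := by
  subst hS
  set c : A := algebraMap ℚ A (1/2) with hcdef
  have hc : (2 : A) * c = 1 := by
    rw [hcdef, show (2:A) = algebraMap ℚ A 2 from (map_ofNat (algebraMap ℚ A) 2).symm, ← map_mul]
    norm_num
  have hsmul : ∀ x : A, (1/2 : ℚ) • x = c * x := fun x => Algebra.smul_def _ _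
  have hsmul2 : ∀ x : A, (-(1/2) : ℚ) • x = -(c * x) := by
    intro x; rw [neg_smul, hsmul]
  have hpow : (1 + t + φ) ^ μ = (1 + t + φ) ^ (μ - 1) * (1 + t + φ) := by
    rw [← pow_succ]; congr 1; omega
  rw [hpow]
  simp only [hsmul, hsmul2]
  have hunit : IsUnit ((2 : A) * (μ : A) * ((μ : A) - 1) * ((μ : A) - 2)) :=
    (((IsUnit.of_mul_eq_one _ hc).mul (IsUnit.of_mul_eq_one _ hu)).mul
      (IsUnit.of_mul_eq_one _ hv)).mul (IsUnit.of_mul_eq_one _ hw)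
  refine hunit.mul_left_cancel ?_
  linear_combination
    ((4:A)*(μ:A)*u + (4:A)*(μ:A)*u*φ + (4:A)*(μ:A)*u*t + (-6:A)*(μ:A)^2*u
      + (-6:A)*(μ:A)^2*u*φ + (-6:A)*(μ:A)^2*u*t + (2:A)*(μ:A)^3*u + (2:A)*(μ:A)^3*u*φ
      + (2:A)*(μ:A)^3*u*t) * hcrit
    + ((-4:A)*φ + (-4:A)*c*φ^2 + (4:A)*c*t^2 + (-4:A)*w*φ + (-4:A)*w*φ^2 + (4:A)*w*t
      + (4:A)*w*t^2 + (4:A)*v*w*φ + (4:A)*v*w*t + (6:A)*(μ:A)*φ + (10:A)*(μ:A)*c*φ^2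
      + (-6:A)*(μ:A)*c*t^2 + (10:A)*(μ:A)*w*φ + (10:A)*(μ:A)*w*φ^2 + (-6:A)*(μ:A)*w*t
      + (4:A)*(μ:A)*w*t*φ + (-6:A)*(μ:A)*w*t^2 + (-6:A)*(μ:A)*v*w*φ + (-6:A)*(μ:A)*v*w*t
      + (-2:A)*(μ:A)^2*φ + (-8:A)*(μ:A)^2*c*φ^2 + (2:A)*(μ:A)^2*c*t^2 + (-8:A)*(μ:A)^2*w*φ
      + (-8:A)*(μ:A)^2*w*φ^2 + (2:A)*(μ:A)^2*w*t + (-6:A)*(μ:A)^2*w*t*φ + (2:A)*(μ:A)^2*w*t^2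
      + (2:A)*(μ:A)^2*v*w*φ + (2:A)*(μ:A)^2*v*w*t + (2:A)*(μ:A)^3*c*φ^2 + (2:A)*(μ:A)^3*w*φ
      + (2:A)*(μ:A)^3*w*φ^2 + (2:A)*(μ:A)^3*w*t*φ) * hu
    + ((-4:A)*w*φ + (-4:A)*w*t + (6:A)*(μ:A)*w*φ + (6:A)*(μ:A)*w*t + (-2:A)*(μ:A)^2*w*φ
      + (-2:A)*(μ:A)^2*w*t) * hv
    + ((4:A)*φ + (2:A)*φ^2 + (-2:A)*t^2 + (-6:A)*(μ:A)*φ + (-4:A)*(μ:A)*φ^2 + (2:A)*(μ:A)*t^2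
      + (-2:A)*(μ:A)*c*φ^2 + (2:A)*(μ:A)*c*t^2 + (2:A)*(μ:A)^2*φ + (2:A)*(μ:A)^2*φ^2
      + (4:A)*(μ:A)^2*c*φ^2 + (-2:A)*(μ:A)^2*c*t^2 + (-2:A)*(μ:A)^3*c*φ^2) * hw
    + ((-2:A)*φ^2 + (2:A)*t^2 + (4:A)*(μ:A)*φ^2 + (-2:A)*(μ:A)*t^2 + (-2:A)*(μ:A)^2*φ^2) * hc
end

section
/- Let $m \geq 2$ be a natural number, $E$ a unit in $\mathbb{Q}(q)$, and let $\varphi \in \mathbb{Q}(q)[[t]]$ be a formal power series satisfying the functional equation $c\,E\,(1 + t + \varphi)^{m} = \varphi\frac{m}{m-1} + \frac{t}{m-1} + \frac{1}{m(m-1)}$ for a nonzero constant $c \in \mathbb{Q}(q)$ (here $m$ plays the role of $q^2$, with exponent $m = q^2$). Then $\varphi$ satisfies the differential equation $(1 - m\varphi)\,\varphi' = (m+1)\varphi + t$ in $\mathbb{Q}(q)[[t]]$, where $\varphi'$ denotes the formal derivative in $t$. -/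
/-!
Write `ψ = 1 + X + φ` and `a = m`. Clearing denominators turns the functional equation into
`κ ψ^m = a²φ + aX + 1`. Differentiating and multiplying by `ψ` gives
`a κ ψ^m ψ' = ψ (a²φ' + a)`, and substituting the equation back for `κ ψ^m` eliminates `ψ^m`:
`a (a²φ + aX + 1)(1 + φ') = a (aφ' + 1) ψ`, which is `a(a - 1)` times the differential equation.
-/

open PowerSeries

theorem Derivation.mul_map_pow {R A : Type*} [CommSemiring R] [CommSemiring A] [Algebra R A]
    (D : Derivation R A A) (a : A) (n : ℕ) : a * D (a ^ n) = n * (a ^ n * D a) := by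
  rcases n with _ | n
  · simp
  · rw [Derivation.leibniz_pow, nsmul_eq_mul, smul_eq_mul, Nat.add_sub_cancel, pow_succ]
    ring

theorem PowerSeries.derivative_C_mul {R : Type*} [CommSemiring R] (r : R) (f : R⟦X⟧) :
    d⁄dX R (C r * f) = C r * d⁄dX R f := by
  simp [Derivation.leibniz]

section

variable {K : Type*} [Field K] {m : ℕ}

theorem pow_eq_of_functional_eq (hm0 : (m : K) ≠ 0) (hm1 : (m : K) ≠ 1) {κ : K} {φ : K⟦X⟧}
    (h : C κ * (1 + X + φ) ^ m
      = φ * C ((m : K) / ((m : K) - 1)) + X * C (1 / ((m : K) - 1))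
        + C (1 / ((m : K) * ((m : K) - 1)))) :
    C ((m : K) * ((m : K) - 1) * κ) * (1 + X + φ) ^ m
      = C ((m : K) ^ 2) * φ + C (m : K) * X + 1 := by
  set a : K := (m : K)
  have ha1 : a - 1 ≠ 0 := sub_ne_zero.mpr hm1
  have hC : ∀ {r s t : K}, r * s = t → C r * C s = C t := fun hrs => by rw [← hrs, map_mul]
  have h₁ : a * (a - 1) * (a / (a - 1)) = a ^ 2 := by field_simp
  have h₂ : a * (a - 1) * (1 / (a - 1)) = a := by field_simp
  have h₃ : a * (a - 1) * (1 / (a * (a - 1))) = 1 := by field_simp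
  linear_combination C (a * (a - 1)) * h - (1 + X + φ) ^ m * hC (rfl : a * (a - 1) * κ = _)
    + φ * hC h₁ + X * hC h₂ + (hC h₃).trans (map_one C)

theorem ode_of_pow_eq (hm0 : (m : K) ≠ 0) (hm1 : (m : K) ≠ 1) {κ : K} {φ : K⟦X⟧}
    (h : C κ * (1 + X + φ) ^ m = C ((m : K) ^ 2) * φ + C (m : K) * X + 1) :
    (1 - C (m : K) * φ) * d⁄dX K φ = C ((m : K) + 1) * φ + X := by
  have hψ : d⁄dX K (1 + X + φ) = 1 + d⁄dX K φ := by simp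
  have hd : (1 + X + φ) * d⁄dX K (C κ * (1 + X + φ) ^ m)
      = (1 + X + φ) * d⁄dX K (C ((m : K) ^ 2) * φ + C (m : K) * X + 1) := by rw [h]
  rw [derivative_C_mul, mul_left_comm, Derivation.mul_map_pow, hψ, ← map_natCast C m] at hd
  simp only [map_add, derivative_C_mul, derivative_X, Derivation.map_one_eq_zero, add_zero,
    mul_one] at hd
  refine mul_left_cancel₀ ((map_ne_zero C).mpr (mul_ne_zero hm0 (sub_ne_zero.mpr hm1))) ?_
  simp only [map_mul, map_sub, map_add, map_pow, map_one] at h hd ⊢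
  linear_combination C (m : K) * (1 + d⁄dX K φ) * h - hd

end

theorem stmt_5_general (m : ℕ) (hm : 2 ≤ m) (E : (RatFunc ℚ)ˣ) (c : RatFunc ℚ)
    (φ : PowerSeries (RatFunc ℚ))
    (heq : C c * C (E : RatFunc ℚ) * (1 + X + φ) ^ m
      = φ * C ((m : RatFunc ℚ) / ((m : RatFunc ℚ) - 1))
        + X * C (1 / ((m : RatFunc ℚ) - 1))
        + C (1 / ((m : RatFunc ℚ) * ((m : RatFunc ℚ) - 1)))) :
    (1 - C (m : RatFunc ℚ) * φ) * derivative (RatFunc ℚ) φ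
      = C ((m : RatFunc ℚ) + 1) * φ + X := by
  have hm0 : (m : RatFunc ℚ) ≠ 0 := by exact_mod_cast (by omega : m ≠ 0)
  have hm1 : (m : RatFunc ℚ) ≠ 1 := by exact_mod_cast (by omega : m ≠ 1)
  rw [← map_mul] at heq
  exact ode_of_pow_eq hm0 hm1 (pow_eq_of_functional_eq hm0 hm1 heq)

/-- the algebraic functional equation (2.12) implies the universal
differential equation `(1 - mφ)φ' = (m+1)φ + t`. -/
theorem stmt_5 (m : ℕ) (hm : 2 ≤ m) (E : (RatFunc ℚ)ˣ) (c : RatFunc ℚ) (hc : c ≠ 0)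
    (φ : PowerSeries (RatFunc ℚ))
    (heq : C c * C (E : RatFunc ℚ) * (1 + X + φ) ^ m
      = φ * C ((m : RatFunc ℚ) / ((m : RatFunc ℚ) - 1))
        + X * C (1 / ((m : RatFunc ℚ) - 1))
        + C (1 / ((m : RatFunc ℚ) * ((m : RatFunc ℚ) - 1)))) :
    (1 - C (m : RatFunc ℚ) * φ) * derivative (RatFunc ℚ) φ
      = C ((m : RatFunc ℚ) + 1) * φ + X :=
  stmt_5_general m hm E c φ heq
end

section
/- Let $R$ be a commutative $\mathbb{Q}$-algebra, $m$ a natural number with $m \neq 1$ and $m$ invertible in $R$, and let $\varphi \in R[[t]]$ satisfy $(1 - m\varphi)\varphi' = (m+1)\varphi + t$. Set $x = t + \frac{m+1}{m}$ and $y = m\varphi - 1$, viewed in $R[[t]]$. Then $(y' + 1)(y + mx) = m(y + x)(y' + m)$ in $R[[t]]$, that is, $(m\varphi' + 1)\cdot m(\varphi + t + 1) = m\,(m\varphi + t + \tfrac{1}{m})\,(m\varphi' + m)$. -/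
open PowerSeries

/-- the implicit general solution of the universal ODE: if
`(1 - mφ)φ' = (m+1)φ + t` then, with `x = t + (m+1)/m`, `y = mφ - 1`, the logarithmic
derivative identity `(y'+1)(y+mx) = m(y+x)(y'+m)` holds, i.e.
`(mφ' + 1)·m(φ+t+1) = m·(mφ + t + 1/m)·(mφ' + m)`; here `u = 1/m`. -/
theorem stmt_8 (R : Type*) [CommRing R] [Algebra ℚ R] (m : ℕ) (hm : m ≠ 1)
    (u : R) (hu : (m : R) * u = 1) (φ : PowerSeries R)
    (hφ : (1 - C (m : R) * φ) * derivative R φ = (C (m : R) + 1) * φ + X) :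
    (C (m : R) * derivative R φ + 1) * (C (m : R) * (φ + X + 1))
      = C (m : R) * (C (m : R) * φ + X + C u)
        * (C (m : R) * derivative R φ + C (m : R)) := by
  have hc : C (m : R) * C u = 1 := by rw [← map_mul, hu, map_one]
  linear_combination (C (m : R) * (C (m : R) - 1)) * hφ
    - (C (m : R) * derivative R φ + C (m : R)) * hc
end

section
/- Let $I \subseteq \mathbb{R}$ be an open interval, $X \in \mathbb{R}$ a constant, and $\varphi : I \to \mathbb{R}$ a differentiable function with $1 + t + \varphi(t) > 0$ for all $t \in I$, satisfying the implicit equation $(1 + t + \varphi)\log(1 + t + \varphi) = 2\varphi + t - X(1 + t + \varphi)$ on $I$. Then $\varphi$ satisfies the differential equation $(1 - \varphi)\varphi' = 2\varphi + t$ on $I$. -/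
open Filter Topology

theorem HasDerivAt.mul_log_add_const_eq {u g : ℝ → ℝ} {u' g' X t : ℝ}
    (hu : HasDerivAt u u' t) (hg : HasDerivAt g g' t) (hut : u t ≠ 0)
    (hrel : ∀ᶠ s in 𝓝 t, u s * Real.log (u s) = g s - X * u s) :
    u' * (Real.log (u t) + 1 + X) = g' := by
  have hlhs : HasDerivAt (fun s => u s * Real.log (u s) + X * u s)
      ((Real.log (u t) + 1) * u' + X * u') t :=
    ((Real.hasDerivAt_mul_log hut).comp t hu).add (hu.const_mul X)
  have hg' : HasDerivAt (fun s => u s * Real.log (u s) + X * u s) g' t :=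
    hg.congr_of_eventuallyEq (hrel.mono fun s hs => by linear_combination hs)
  rw [← hlhs.unique hg']
  ring

/-- on an open interval, a differentiable solution of the implicit equation
`(1+t+φ)log(1+t+φ) = 2φ + t - X(1+t+φ)` satisfies `(1-φ)φ' = 2φ + t`. -/
theorem stmt_10 (a b : ℝ) (Xc : ℝ) (φ : ℝ → ℝ)
    (hdiff : ∀ t ∈ Set.Ioo a b, DifferentiableAt ℝ φ t)
    (hpos : ∀ t ∈ Set.Ioo a b, 0 < 1 + t + φ t)
    (heq : ∀ t ∈ Set.Ioo a b,
      (1 + t + φ t) * Real.log (1 + t + φ t) = 2 * φ t + t - Xc * (1 + t + φ t)) :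
    ∀ t ∈ Set.Ioo a b, (1 - φ t) * deriv φ t = 2 * φ t + t := by
  intro t ht
  have hφ : HasDerivAt φ (deriv φ t) t := (hdiff t ht).hasDerivAt
  have hderiv : (1 + deriv φ t) * (Real.log (1 + t + φ t) + 1 + Xc) = 2 * deriv φ t + 1 :=
    HasDerivAt.mul_log_add_const_eq (u := fun s => 1 + s + φ s) (g := fun s => 2 * φ s + s)
      (((hasDerivAt_id t).const_add 1).add hφ)
      ((hφ.const_mul 2).add (hasDerivAt_id t)) (hpos t ht).ne'
      (eventually_of_mem (Ioo_mem_nhds ht.1 ht.2) heq)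
  -- the implicit equation itself eliminates `log (1 + t + φ t)` from the differentiated one
  linear_combination (1 + deriv φ t) * heq t ht - (1 + t + φ t) * hderiv
end
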